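/- arXiv:1208.5443 — 5 statements merged into one kernel-verified Lean document; each statement's English description precedes it below -/
import Mathlib

section
/- Let p ∈ (0,1) and let x : ℤ → ℝ be a bounded function satisfying, for all k ∈ ℤ, -x(k-1) + (p + 1/p) x(k) - x(k+1) ≥ 0. Then for all k ∈ ℤ, x(k)/p - x(k-1) ≥ 0 and x(k)/p - x(k+1) ≥ 0; that is, x satisfies the (log(1/p))-differential-privacy ratio constraints x(k±1) ≤ (1/p) x(k). -/
lemma aux_stmt2 (p : ℝ) (hp : 0 < p) (hp1 : p < 1) (x : ℤ → ℝ) (C : ℝ)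
    (hC : ∀ k : ℤ, |x k| ≤ C)
    (hineq : ∀ k : ℤ, 0 ≤ -x (k - 1) + (p + 1 / p) * x k - x (k + 1)) (k : ℤ) :
    0 ≤ x k / p - x (k - 1) := by
  have hp0 : p ≠ 0 := hp.ne'
  have key : ∀ N : ℕ, p ^ N * x (k + N + 1) - p ^ (N + 1) * x (k + N) ≤
      x k / p - x (k - 1) := by
    intro N
    induction N with
    | zero =>
      have h := hineq k
      have hx : x k / p = (1 / p) * x k := by ring
      have e0 : k + ((0:ℕ):ℤ) + 1 = k + 1 := by push_cast; ring
      have e0' : k + ((0:ℕ):ℤ) = k := by push_cast; ring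
      rw [e0, e0', pow_zero, pow_one, one_mul, hx]
      have hexp : (p + 1/p) * x k = p * x k + (1/p) * x k := by ring
      rw [hexp] at h
      linarith
    | succ N ih =>
      have h := hineq (k + N + 1)
      have e1 : (k + (N : ℤ) + 1) - 1 = k + N := by ring
      have e2 : (k + (N : ℤ) + 1) + 1 = k + N + 2 := by ring
      rw [e1, e2] at h
      have hmul : 0 ≤ p ^ (N + 1) * (-x (k + N) + (p + 1 / p) * x (k + N + 1)
          - x (k + N + 2)) := mul_nonneg (pow_nonneg hp.le _) h
      have hexp : p ^ (N + 1) * (-x (k + N) + (p + 1 / p) * x (k + N + 1)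
          - x (k + N + 2)) = -(p ^ (N + 1)) * x (k + N) + (p ^ (N + 2) + p ^ N)
          * x (k + N + 1) - p ^ (N + 1) * x (k + N + 2) := by
        field_simp
        ring
      rw [hexp] at hmul
      have ec : ((N : ℤ) + 1) = (((N + 1 : ℕ) : ℤ)) := by push_cast; ring
      have e3 : k + ((N + 1 : ℕ) : ℤ) + 1 = k + N + 2 := by push_cast; ring
      have e4 : k + ((N + 1 : ℕ) : ℤ) = k + N + 1 := by push_cast; ring
      rw [e3, e4]
      linarith [ih, hmul]
  have hC0 : 0 ≤ C := le_trans (abs_nonneg _) (hC 0)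
  have hb : ∀ N : ℕ, -(2 * C) * p ^ N ≤ x k / p - x (k - 1) := by
    intro N
    refine le_trans ?_ (key N)
    have h1 := abs_le.mp (hC (k + N + 1))
    have h2 := abs_le.mp (hC (k + N))
    have hpN : (0 : ℝ) < p ^ N := pow_pos hp N
    have hps : p ^ (N + 1) = p ^ N * p := pow_succ p N
    nlinarith [mul_nonneg hpN.le (by linarith [h1.1] : (0:ℝ) ≤ x (k + N + 1) + C),
      mul_nonneg hpN.le (by nlinarith [h2.2] : (0:ℝ) ≤ C - p * x (k + N))]
  have ht : Filter.Tendsto (fun N : ℕ => -(2 * C) * p ^ N) Filter.atTop (nhds 0) := by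
    have := (tendsto_pow_atTop_nhds_zero_of_lt_one hp.le hp1).const_mul (-(2 * C))
    simpa using this
  exact le_of_tendsto ht (Filter.Eventually.of_forall hb)

/-- Bounded sequences satisfying the row-cone inequalities of the geometric
mechanism satisfy the (log(1/p))-differential-privacy ratio constraints. -/
theorem stmt_2 (p : ℝ) (hp : 0 < p) (hp1 : p < 1) (x : ℤ → ℝ)
    (hbound : ∃ C : ℝ, ∀ k : ℤ, |x k| ≤ C)
    (hineq : ∀ k : ℤ, 0 ≤ -x (k - 1) + (p + 1 / p) * x k - x (k + 1)) :
    ∀ k : ℤ, 0 ≤ x k / p - x (k - 1) ∧ 0 ≤ x k / p - x (k + 1) := by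
  obtain ⟨C, hC⟩ := hbound
  intro k
  constructor
  · exact aux_stmt2 p hp hp1 x C hC hineq k
  · have h := aux_stmt2 p hp hp1 (fun m => x (-m)) C (fun m => hC (-m))
      (fun m => by
        have h := hineq (-m)
        have e1 : (-m : ℤ) - 1 = -(m + 1) := by ring
        have e2 : (-m : ℤ) + 1 = -(m - 1) := by ring
        rw [e1, e2] at h
        show 0 ≤ -x (-(m - 1)) + (p + 1 / p) * x (-m) - x (-(m + 1))
        linarith) (-k)
    have e1 : -(-k - 1) = k + 1 := by ring
    rw [e1, neg_neg] at h
    exact h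
end

section
/- Let λ₁, λ₂ > 0 and let f_Z(·; λ₁, λ₂) be the Skellam(λ₁,λ₂) probability mass function on ℤ, i.e., the mass function of X - Y where X, Y are independent Poisson(λ₁) and Poisson(λ₂) random variables. Define g_Z(k) = (-1)^k f_Z(k; λ₁, λ₂). Then the discrete convolution (g_Z ⋆ f_Z)(k) equals e^{-2(λ₁+λ₂)} if k = 0 and 0 otherwise. -/
/-!
Write `σ k = (-1)^k`. Since `σ` is multiplicative, twisting by it commutes with convolution,
so `g_Z = (σ f_X) ⋆ (σ f_Y)`. Convolution of absolutely summable functions on `ℤ` is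
commutative and associative, hence `g_Z ⋆ f_Z = ((σ f_X) ⋆ f_X) ⋆ ((σ f_Y) ⋆ f_Y)`.
With `e_a n = a^n / n!` (and `0` for `n < 0`) the binomial theorem gives
`e_a ⋆ e_b = e_(a+b)`, while `σ e_a = e_(-a)`; so `(σ f_X) ⋆ f_X = e^(-2λ₁) e_0` and, after
reflecting, `(σ f_Y) ⋆ f_Y = e^(-2λ₂) e_0`, where `e_0` is the indicator of `0`.
-/

open Finset Function

section DiscreteConv

variable {G : Type*} [AddCommGroup G]

noncomputable def discreteConv (f g : G → ℝ) (k : G) : ℝ := ∑' j, f (k - j) * g j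

theorem discreteConv_comm (f g : G → ℝ) : discreteConv f g = discreteConv g f := by
  funext k
  rw [discreteConv, ← (Equiv.subLeft k).tsum_eq]
  simp [discreteConv, mul_comm]

theorem discreteConv_smul_smul (c d : ℝ) (f g : G → ℝ) :
    discreteConv (c • f) (d • g) = (c * d) • discreteConv f g := by
  funext k
  simp only [discreteConv, Pi.smul_apply, smul_eq_mul, ← tsum_mul_left]
  exact tsum_congr fun j => by ring

theorem discreteConv_mul_of_map_add {ψ : G → ℝ} (hψ : ∀ a b, ψ (a + b) = ψ a * ψ b)
    (f g : G → ℝ) : discreteConv (ψ * f) (ψ * g) = ψ * discreteConv f g := by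
  funext k
  simp only [discreteConv, Pi.mul_apply, ← tsum_mul_left]
  refine tsum_congr fun j => ?_
  rw [← sub_add_cancel k j, hψ, add_sub_cancel_right]
  ring

theorem discreteConv_comp_neg (f g : G → ℝ) :
    discreteConv (f ∘ Neg.neg) (g ∘ Neg.neg) = discreteConv f g ∘ Neg.neg := by
  funext k
  rw [comp_apply, discreteConv, ← (Equiv.neg G).tsum_eq]
  simp [discreteConv, sub_eq_add_neg, add_comm]

variable {f g h : G → ℝ}

theorem summable_discreteConv (hf : Summable f) (hg : Summable g) :
    Summable (discreteConv f g) := by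
  have hprod : Summable fun p : G × G => f p.1 * g p.2 :=
    summable_mul_of_summable_norm hf.norm hg.norm
  have hshear : Injective fun p : G × G => (p.1 - p.2, p.2) := by
    rintro ⟨a, b⟩ ⟨c, d⟩ hp
    obtain ⟨hac, rfl⟩ := Prod.ext_iff.mp hp
    simpa using hac
  exact (hprod.comp_injective hshear).prod

theorem discreteConv_assoc (hf : Summable f) (hg : Summable g) (hh : Summable h) :
    discreteConv (discreteConv f g) h = discreteConv f (discreteConv g h) := by
  funext k
  have htriple : Summable fun p : G × G × G => f p.1 * (g p.2.1 * h p.2.2) :=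
    summable_mul_of_summable_norm hf.norm (summable_mul_of_summable_norm hg.norm hh.norm).norm
  have hsection : Injective fun p : G × G => (k - p.1, p.1 - p.2, p.2) := by
    rintro ⟨a, b⟩ ⟨c, d⟩ hp
    simp only [Prod.mk.injEq, sub_right_inj] at hp
    obtain ⟨rfl, -, rfl⟩ := hp
    rfl
  have hsum : Summable (uncurry fun j i => f (k - j) * (g (j - i) * h i)) :=
    (htriple.comp_injective hsection :)
  simp only [discreteConv, ← tsum_mul_left, ← tsum_mul_right]
  rw [← hsum.tsum_comm]
  refine tsum_congr fun j => ?_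
  rw [← (Equiv.addLeft j).tsum_eq (fun i => f (k - i) * (g (i - j) * h j))]
  refine tsum_congr fun i => ?_
  simp only [Equiv.coe_addLeft, add_sub_cancel_left, sub_sub]
  ring

theorem discreteConv_discreteConv_discreteConv_comm {a b c d : G → ℝ} (ha : Summable a)
    (hb : Summable b) (hc : Summable c) (hd : Summable d) :
    discreteConv (discreteConv a b) (discreteConv c d)
      = discreteConv (discreteConv a c) (discreteConv b d) := by
  rw [discreteConv_assoc ha hb (summable_discreteConv hc hd), ← discreteConv_assoc hb hc hd,
    discreteConv_comm b c, discreteConv_assoc hc hb hd,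
    ← discreteConv_assoc ha hc (summable_discreteConv hb hd)]

end DiscreteConv

section Exponential

open Nat

noncomputable def expCoeff (a : ℝ) (m : ℤ) : ℝ :=
  if 0 ≤ m then a ^ m.toNat / m.toNat ! else 0

theorem expCoeff_natCast (a : ℝ) (n : ℕ) : expCoeff a n = a ^ n / n ! := by
  simp [expCoeff]

theorem expCoeff_of_neg (a : ℝ) {m : ℤ} (hm : m < 0) : expCoeff a m = 0 :=
  if_neg hm.not_ge

theorem expCoeff_eq_zero_of_notMem_range (a : ℝ) {m : ℤ}
    (hm : m ∉ Set.range ((↑) : ℕ → ℤ)) :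
    expCoeff a m = 0 :=
  expCoeff_of_neg a (by contrapose! hm; exact ⟨m.toNat, Int.toNat_of_nonneg hm⟩)

theorem summable_expCoeff (a : ℝ) : Summable (expCoeff a) := by
  rw [← Nat.cast_injective.summable_iff fun m hm => expCoeff_eq_zero_of_notMem_range a hm]
  simpa [comp_def, expCoeff_natCast] using Real.summable_pow_div_factorial a

theorem expCoeff_zero_apply (m : ℤ) : expCoeff 0 m = if m = 0 then 1 else 0 := by
  rcases eq_or_ne m 0 with rfl | hm
  · simp [expCoeff]
  · rw [if_neg hm, expCoeff]
    split_ifs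
    · rw [zero_pow (by omega), zero_div]
    · rfl

theorem expCoeff_zero_comp_neg : expCoeff 0 ∘ Neg.neg = expCoeff 0 := by
  funext m
  simp [expCoeff_zero_apply]

theorem sum_range_pow_div_factorial_mul (a b : ℝ) (n : ℕ) :
    ∑ m ∈ range (n + 1), a ^ (n - m) / (n - m)! * (b ^ m / m !) = (a + b) ^ n / n ! := by
  rw [add_comm a b, add_pow, sum_div]
  refine sum_congr rfl fun m hm => ?_
  rw [Nat.cast_choose ℝ (Nat.lt_succ_iff.mp (mem_range.mp hm))]
  field_simp

theorem expCoeff_sub_mul_expCoeff_eq_zero (a b : ℝ) {k j : ℤ} (hj : j < 0 ∨ k < j) :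
    expCoeff a (k - j) * expCoeff b j = 0 := by
  rcases hj with hj | hj
  · rw [expCoeff_of_neg b hj, mul_zero]
  · rw [expCoeff_of_neg a (by omega), zero_mul]

theorem discreteConv_expCoeff (a b : ℝ) :
    discreteConv (expCoeff a) (expCoeff b) = expCoeff (a + b) := by
  funext k
  rcases lt_or_ge k 0 with hk | hk
  · rw [expCoeff_of_neg _ hk, discreteConv]
    exact (tsum_congr fun j => expCoeff_sub_mul_expCoeff_eq_zero a b (by omega)).trans tsum_zero
  · lift k to ℕ using hk
    rw [discreteConv, ← Nat.cast_injective.tsum_eq, tsum_eq_sum (s := range (k + 1)),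
      expCoeff_natCast, ← sum_range_pow_div_factorial_mul]
    · refine sum_congr rfl fun m hm => ?_
      rw [← Nat.cast_sub (Nat.lt_succ_iff.mp (mem_range.mp hm)), expCoeff_natCast,
        expCoeff_natCast]
    · intro m hm
      exact expCoeff_sub_mul_expCoeff_eq_zero a b (Or.inr (by simp at hm; omega))
    · intro j hj
      by_contra hr
      exact hj (expCoeff_sub_mul_expCoeff_eq_zero a b (Or.inl (by simpa using hr)))

end Exponential

noncomputable def altSign (k : ℤ) : ℝ := (-1) ^ k

theorem altSign_add (a b : ℤ) : altSign (a + b) = altSign a * altSign b :=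
  zpow_add₀ (by norm_num) a b

theorem altSign_neg (k : ℤ) : altSign (-k) = altSign k := by
  rw [altSign, altSign, zpow_neg, ← inv_zpow, inv_neg, inv_one]

theorem Summable.altSign_mul {f : ℤ → ℝ} (hf : Summable f) : Summable (altSign * f) :=
  hf.abs.of_norm_bounded fun k => by simp [altSign]

theorem altSign_mul_comp_neg (f : ℤ → ℝ) :
    altSign * (f ∘ Neg.neg) = (altSign * f) ∘ Neg.neg := by
  funext k
  simp [altSign_neg]

theorem altSign_mul_expCoeff (a : ℝ) : altSign * expCoeff a = expCoeff (-a) := by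
  funext m
  rcases lt_or_ge m 0 with hm | hm
  · simp [expCoeff_of_neg _ hm]
  · lift m to ℕ using hm
    change (-1 : ℝ) ^ (m : ℤ) * expCoeff a m = expCoeff (-a) m
    rw [expCoeff_natCast, expCoeff_natCast, zpow_natCast, neg_pow a, mul_div_assoc]

theorem discreteConv_altSign_mul_smul_expCoeff (c a : ℝ) :
    discreteConv (altSign * (c • expCoeff a)) (c • expCoeff a) = (c * c) • expCoeff 0 := by
  rw [mul_smul_comm, altSign_mul_expCoeff, discreteConv_smul_smul, discreteConv_expCoeff,
    neg_add_cancel]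

theorem stmt_7_general (lam1 lam2 : ℝ)
    (fX fY fZ gZ : ℤ → ℝ)
    (hfX : ∀ m : ℤ, fX m =
      if 0 ≤ m then Real.exp (-lam1) * lam1 ^ m.toNat / Nat.factorial m.toNat else 0)
    (hfY : ∀ m : ℤ, fY m =
      if m ≤ 0 then Real.exp (-lam2) * lam2 ^ (-m).toNat / Nat.factorial (-m).toNat else 0)
    (hfZ : ∀ k : ℤ, fZ k = ∑' j : ℤ, fX (k - j) * fY j)
    (hgZ : ∀ k : ℤ, gZ k = (-1 : ℝ) ^ k * fZ k) :
    ∀ k : ℤ, ∑' j : ℤ, gZ (k - j) * fZ j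
      = if k = 0 then Real.exp (-(2 * (lam1 + lam2))) else 0 := by
  have hX : fX = Real.exp (-lam1) • expCoeff lam1 := funext fun m => by
    rw [hfX, Pi.smul_apply, expCoeff, smul_eq_mul, mul_ite, mul_zero, mul_div_assoc]
  have hY : fY = (Real.exp (-lam2) • expCoeff lam2) ∘ Neg.neg := funext fun m => by
    rw [hfY, comp_apply, Pi.smul_apply, expCoeff, smul_eq_mul, mul_ite, mul_zero, mul_div_assoc]
    simp only [neg_nonneg]
  have hZ : fZ = discreteConv fX fY := funext hfZ
  have hG : gZ = discreteConv (altSign * fX) (altSign * fY) := by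
    rw [discreteConv_mul_of_map_add altSign_add, ← hZ]
    exact funext hgZ
  have hsX : Summable fX := by
    rw [hX]
    exact (summable_expCoeff lam1).const_smul (Real.exp (-lam1))
  have hsY : Summable fY := by
    rw [hY]
    exact (Equiv.neg ℤ).summable_iff.mpr ((summable_expCoeff lam2).const_smul (Real.exp (-lam2)))
  have hXX : discreteConv (altSign * fX) fX
      = (Real.exp (-lam1) * Real.exp (-lam1)) • expCoeff 0 := by
    rw [hX, discreteConv_altSign_mul_smul_expCoeff]
  have hYY : discreteConv (altSign * fY) fY
      = (Real.exp (-lam2) * Real.exp (-lam2)) • expCoeff 0 := by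
    rw [hY, altSign_mul_comp_neg, discreteConv_comp_neg, discreteConv_altSign_mul_smul_expCoeff,
      Pi.smul_comp, expCoeff_zero_comp_neg]
  intro k
  calc ∑' j, gZ (k - j) * fZ j
      = discreteConv (discreteConv (altSign * fX) fX) (discreteConv (altSign * fY) fY) k := by
        rw [← discreteConv_discreteConv_discreteConv_comm hsX.altSign_mul hsY.altSign_mul hsX hsY,
          ← hZ, ← hG]
        rfl
    _ = if k = 0 then Real.exp (-(2 * (lam1 + lam2))) else 0 := by
      rw [hXX, hYY, discreteConv_smul_smul, discreteConv_expCoeff, add_zero, Pi.smul_apply,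
        expCoeff_zero_apply, smul_eq_mul, ← Real.exp_add, ← Real.exp_add, ← Real.exp_add]
      split_ifs <;> ring_nf

/-- The alternating-sign Skellam pmf convolved with the Skellam pmf is
`e^{-2(λ₁+λ₂)}` times the Kronecker delta at 0. -/
theorem stmt_7 (lam1 lam2 : ℝ) (h1 : 0 < lam1) (h2 : 0 < lam2)
    (fX fY fZ gZ : ℤ → ℝ)
    (hfX : ∀ m : ℤ, fX m =
      if 0 ≤ m then Real.exp (-lam1) * lam1 ^ m.toNat / Nat.factorial m.toNat else 0)
    (hfY : ∀ m : ℤ, fY m =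
      if m ≤ 0 then Real.exp (-lam2) * lam2 ^ (-m).toNat / Nat.factorial (-m).toNat else 0)
    (hfZ : ∀ k : ℤ, fZ k = ∑' j : ℤ, fX (k - j) * fY j)
    (hgZ : ∀ k : ℤ, gZ k = (-1 : ℝ) ^ k * fZ k) :
    ∀ k : ℤ, ∑' j : ℤ, gZ (k - j) * fZ j
      = if k = 0 then Real.exp (-(2 * (lam1 + lam2))) else 0 :=
  stmt_7_general lam1 lam2 fX fY fZ gZ hfX hfY hfZ hgZ
end

section
/- Let M be the bi-infinite matrix indexed by ℤ×ℤ with M(i,j) = f_Z(i - j; λ₁, λ₂) (Skellam mass function), and let G be the matrix with G(i,j) = e^{2(λ₁+λ₂)} (-1)^{i-j} f_Z(i - j; λ₁, λ₂). Then for all r, c ∈ ℤ, the (absolutely convergent) sum over j of M(r,j) G(j,c) equals 1 if r = c and 0 otherwise; i.e., G is a two-sided inverse of M as an operator on bounded sequences. -/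
/-!
The Skellam mass function is the convolution `f_Z = p_{λ₁} ⋆ p̌_{λ₂}` of a Poisson mass function
with a reflected one, and `M`, `G` are Toeplitz, so `M G` is the Toeplitz matrix of
`e^{2(λ₁+λ₂)} f_Z ⋆ (-1)^· f_Z`. Twisting by the character `(-1)^k` commutes with convolution, and
convolution of absolutely summable sequences is associative and commutative, so this kernel
regroups as `(p_{λ₁} ⋆ (-1)^· p_{λ₁}) ⋆ (p̌_{λ₂} ⋆ (-1)^· p̌_{λ₂})`. By the binomial theorem
`p_λ ⋆ (-1)^· p_λ = e^{-2λ} δ₀` (generating functions `e^{λ(z-1)}` and `e^{-λ(z+1)}`), hence `M G = I`.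
-/

open Finset

noncomputable def dconv {G : Type*} [AddCommGroup G] (a b : G → ℝ) (n : G) : ℝ :=
  ∑' j, a (n - j) * b j

section AddCommGroup

variable {G : Type*} [AddCommGroup G] {a b c d : G → ℝ}

lemma summable_abs_mul_sub_mul (ha : Summable fun n => |a n|) (hb : Summable fun n => |b n|) :
    Summable fun p : G × G => |a (p.1 - p.2) * b p.2| := by
  have hprod : Summable fun p : G × G => ‖a p.1 * b p.2‖ :=
    Summable.mul_norm (by simpa only [Real.norm_eq_abs] using ha)
      (by simpa only [Real.norm_eq_abs] using hb)
  have hshear : Function.Injective fun p : G × G => (p.1 - p.2, p.2) := by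
    rintro ⟨x₁, y₁⟩ ⟨x₂, y₂⟩ h
    simp only [Prod.mk.injEq] at h
    obtain ⟨hx, rfl⟩ := h
    simpa using hx
  simpa only [Real.norm_eq_abs, Function.comp_def] using hprod.comp_injective hshear

lemma summable_abs_dconv (ha : Summable fun n => |a n|) (hb : Summable fun n => |b n|) :
    Summable fun n => |dconv a b n| := by
  have h := summable_abs_mul_sub_mul ha hb
  refine h.prod.of_nonneg_of_le (fun n => abs_nonneg _) fun n => ?_
  simpa only [dconv, Real.norm_eq_abs] using
    norm_tsum_le_tsum_norm (f := fun j => a (n - j) * b j)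
      (by simpa only [Real.norm_eq_abs] using h.prod_factor n)

lemma dconv_comm (a b : G → ℝ) : dconv a b = dconv b a := by
  funext n
  rw [dconv, ← (Equiv.subLeft n).tsum_eq]
  simp only [Equiv.subLeft_apply, sub_sub_cancel, dconv, mul_comm]

lemma dconv_assoc (ha : Summable fun n => |a n|) (hb : Summable fun n => |b n|)
    (hc : Summable fun n => |c n|) :
    dconv (dconv a b) c = dconv a (dconv b c) := by
  funext n
  have hsum : Summable (Function.uncurry fun i j => a (n - i) * (b (i - j) * c j)) := by
    rw [← summable_abs_iff]
    refine ((summable_abs_mul_sub_mul hb hc).mul_left (∑' m, |a m|)).of_nonneg_of_le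
      (fun _ => abs_nonneg _) fun p => ?_
    rw [Function.uncurry_def, abs_mul]
    exact mul_le_mul_of_nonneg_right (ha.le_tsum _ fun _ _ => abs_nonneg _) (abs_nonneg _)
  calc dconv (dconv a b) c n
      = ∑' j, ∑' i, a (n - j - i) * b i * c j := by
        simp only [dconv, tsum_mul_right]
    _ = ∑' j, ∑' i, a (n - i) * (b (i - j) * c j) := by
        refine tsum_congr fun j => ?_
        rw [← (Equiv.subRight j).tsum_eq]
        simp only [Equiv.subRight_apply, sub_sub_sub_cancel_right, mul_assoc]
    _ = ∑' i, ∑' j, a (n - i) * (b (i - j) * c j) := hsum.tsum_comm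
    _ = dconv a (dconv b c) n := by
        simp only [dconv, tsum_mul_left]

lemma dconv_dconv_dconv_comm (ha : Summable fun n => |a n|) (hb : Summable fun n => |b n|)
    (hc : Summable fun n => |c n|) (hd : Summable fun n => |d n|) :
    dconv (dconv a b) (dconv c d) = dconv (dconv a c) (dconv b d) := by
  rw [dconv_assoc ha hb (summable_abs_dconv hc hd), ← dconv_assoc hb hc hd, dconv_comm b c,
    dconv_assoc hc hb hd, ← dconv_assoc ha hc (summable_abs_dconv hb hd)]

lemma dconv_comp_neg (a b : G → ℝ) :
    dconv (fun m => a (-m)) (fun m => b (-m)) = fun n => dconv a b (-n) := by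
  funext n
  rw [dconv, dconv, ← (Equiv.neg G).tsum_eq]
  simp only [Equiv.neg_apply, neg_neg, sub_neg_eq_add, neg_add']

lemma dconv_single_single [DecidableEq G] (x y : ℝ) :
    dconv (Pi.single (0 : G) x) (Pi.single 0 y) = Pi.single 0 (x * y) := by
  funext n
  rw [dconv, tsum_eq_single 0 fun j hj => by simp [hj]]
  by_cases hn : n = 0 <;> simp [hn]

lemma tsum_mul_sub_eq_dconv (a b : G → ℝ) (r c : G) :
    ∑' j, a (r - j) * b (j - c) = dconv a b (r - c) := by
  rw [dconv, ← (Equiv.addRight c).tsum_eq]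
  simp only [Equiv.coe_addRight, add_sub_cancel_right, sub_add_eq_sub_sub_swap]

end AddCommGroup

noncomputable def alternating (a : ℤ → ℝ) (m : ℤ) : ℝ := (-1 : ℝ) ^ m * a m

lemma abs_alternating (a : ℤ → ℝ) (m : ℤ) : |alternating a m| = |a m| := by
  rw [alternating, abs_mul, abs_zpow, abs_neg, abs_one, one_zpow, one_mul]

lemma summable_abs_alternating {a : ℤ → ℝ} (ha : Summable fun n => |a n|) :
    Summable fun n => |alternating a n| := by
  simpa only [abs_alternating] using ha

lemma alternating_comp_neg (a : ℤ → ℝ) :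
    alternating (fun m => a (-m)) = fun m => alternating a (-m) := by
  funext m
  rw [alternating, alternating, zpow_neg, ← inv_zpow, inv_neg, inv_one]

lemma alternating_dconv (a b : ℤ → ℝ) :
    alternating (dconv a b) = dconv (alternating a) (alternating b) := by
  funext n
  rw [alternating, dconv, dconv, ← tsum_mul_left]
  refine tsum_congr fun j => ?_
  have hsign : (-1 : ℝ) ^ n = (-1) ^ (n - j) * (-1) ^ j := by
    rw [← zpow_add₀ (by norm_num), sub_add_cancel]
  rw [alternating, alternating, hsign]
  ring

lemma dconv_eq_zero_of_neg {a b : ℤ → ℝ} (ha : ∀ m < 0, a m = 0) (hb : ∀ m < 0, b m = 0)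
    {n : ℤ} (hn : n < 0) : dconv a b n = 0 := by
  refine (tsum_congr fun j => ?_).trans tsum_zero
  rcases lt_or_ge j 0 with hj | hj
  · rw [hb j hj, mul_zero]
  · rw [ha _ (by omega), zero_mul]

lemma dconv_natCast {a b : ℤ → ℝ} (ha : ∀ m < 0, a m = 0) (hb : ∀ m < 0, b m = 0) (N : ℕ) :
    dconv a b N = ∑ k ∈ range (N + 1), a ↑(N - k) * b k := by
  rw [dconv, tsum_eq_sum (s := (range (N + 1)).map Nat.castEmbedding), sum_map]
  · refine sum_congr rfl fun k hk => ?_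
    rw [mem_range] at hk
    simp [Nat.cast_sub (by omega : k ≤ N)]
  · intro j hj
    simp only [mem_map, mem_range, Nat.castEmbedding_apply, not_exists, not_and] at hj
    rcases lt_or_ge j 0 with hj0 | hj0
    · rw [hb j hj0, mul_zero]
    · lift j to ℕ using hj0
      rw [ha _ (by have := hj j; omega), zero_mul]

noncomputable def poissonSeq (lam : ℝ) (m : ℤ) : ℝ :=
  if 0 ≤ m then Real.exp (-lam) * lam ^ m.toNat / Nat.factorial m.toNat else 0

lemma poissonSeq_natCast (lam : ℝ) (k : ℕ) :
    poissonSeq lam k = Real.exp (-lam) * lam ^ k / k.factorial := by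
  simp [poissonSeq]

lemma poissonSeq_of_neg (lam : ℝ) {m : ℤ} (hm : m < 0) : poissonSeq lam m = 0 :=
  if_neg hm.not_ge

lemma alternating_poissonSeq_of_neg (lam : ℝ) {m : ℤ} (hm : m < 0) :
    alternating (poissonSeq lam) m = 0 := by
  rw [alternating, poissonSeq_of_neg lam hm, mul_zero]

lemma summable_abs_poissonSeq (lam : ℝ) : Summable fun m => |poissonSeq lam m| := by
  apply Summable.of_nat_of_neg
  · refine ((Real.summable_pow_div_factorial |lam|).mul_left (Real.exp (-lam))).of_nonneg_of_le
      (fun _ => abs_nonneg _) fun k => ?_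
    rw [poissonSeq_natCast, abs_div, abs_mul, abs_pow, Nat.abs_cast, abs_of_pos (Real.exp_pos _),
      mul_div_assoc]
  · refine summable_of_ne_finset_zero (s := {0}) fun k hk => ?_
    rw [mem_singleton] at hk
    rw [poissonSeq_of_neg lam (by omega), abs_zero]

lemma poissonSeq_mul_alternating (lam : ℝ) {N k : ℕ} (hk : k ≤ N) :
    poissonSeq lam ↑(N - k) * alternating (poissonSeq lam) k =
      Real.exp (-(2 * lam)) / N.factorial * ((-lam) ^ k * lam ^ (N - k) * N.choose k) := by
  have hfac : (N.choose k * k.factorial * (N - k).factorial : ℝ) = N.factorial := by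
    exact_mod_cast Nat.choose_mul_factorial_mul_factorial hk
  have hexp : Real.exp (-(2 * lam)) = Real.exp (-lam) * Real.exp (-lam) := by
    rw [← Real.exp_add]; ring_nf
  rw [alternating, poissonSeq_natCast, poissonSeq_natCast, zpow_natCast, neg_pow, ← hfac, hexp]
  have := (Nat.choose_pos hk).ne'
  field_simp
  ring

lemma dconv_poissonSeq_alternating (lam : ℝ) :
    dconv (poissonSeq lam) (alternating (poissonSeq lam)) = Pi.single 0 (Real.exp (-(2 * lam))) := by
  funext n
  rcases lt_or_ge n 0 with hn | hn
  · rw [dconv_eq_zero_of_neg (fun _ => poissonSeq_of_neg lam)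
      (fun _ => alternating_poissonSeq_of_neg lam) hn, Pi.single_eq_of_ne hn.ne]
  lift n to ℕ using hn with N
  rw [dconv_natCast (fun _ => poissonSeq_of_neg lam) (fun _ => alternating_poissonSeq_of_neg lam),
    sum_congr rfl fun k hk => poissonSeq_mul_alternating lam (by simpa [Nat.lt_succ_iff] using hk),
    ← mul_sum, ← add_pow, neg_add_cancel]
  rcases Nat.eq_zero_or_pos N with rfl | hN
  · simp
  · rw [zero_pow hN.ne', mul_zero, Pi.single_eq_of_ne (by exact_mod_cast hN.ne')]

noncomputable def skellam (lam1 lam2 : ℝ) : ℤ → ℝ :=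
  dconv (poissonSeq lam1) fun m => poissonSeq lam2 (-m)

lemma dconv_skellam_alternating (lam1 lam2 : ℝ) :
    dconv (skellam lam1 lam2) (alternating (skellam lam1 lam2)) =
      Pi.single 0 (Real.exp (-(2 * (lam1 + lam2)))) := by
  have hX := summable_abs_poissonSeq lam1
  have hY : Summable fun m => |poissonSeq lam2 (-m)| :=
    (summable_abs_poissonSeq lam2).comp_injective neg_injective
  have hsingle_neg : (fun n => (Pi.single 0 (Real.exp (-(2 * lam2))) : ℤ → ℝ) (-n)) =
      Pi.single 0 (Real.exp (-(2 * lam2))) := by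
    funext n
    simp only [Pi.single_apply, neg_eq_zero]
  rw [skellam, alternating_dconv, dconv_dconv_dconv_comm hX hY (summable_abs_alternating hX)
    (summable_abs_alternating hY), dconv_poissonSeq_alternating, alternating_comp_neg,
    dconv_comp_neg, dconv_poissonSeq_alternating, hsingle_neg, dconv_single_single,
    ← Real.exp_add]
  ring_nf

theorem stmt_8_general (lam1 lam2 : ℝ)
    (fX fY fZ : ℤ → ℝ) (M G : ℤ → ℤ → ℝ)
    (hfX : ∀ m : ℤ, fX m =
      if 0 ≤ m then Real.exp (-lam1) * lam1 ^ m.toNat / Nat.factorial m.toNat else 0)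
    (hfY : ∀ m : ℤ, fY m =
      if m ≤ 0 then Real.exp (-lam2) * lam2 ^ (-m).toNat / Nat.factorial (-m).toNat else 0)
    (hfZ : ∀ k : ℤ, fZ k = ∑' j : ℤ, fX (k - j) * fY j)
    (hM : ∀ i j : ℤ, M i j = fZ (i - j))
    (hG : ∀ i j : ℤ, G i j =
      Real.exp (2 * (lam1 + lam2)) * ((-1 : ℝ) ^ (i - j) * fZ (i - j))) :
    ∀ r c : ℤ, ∑' j : ℤ, M r j * G j c = if r = c then 1 else 0 := by
  intro r c
  have hfX' : fX = poissonSeq lam1 := funext hfX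
  have hfY' : fY = fun m => poissonSeq lam2 (-m) := funext fun m => by
    simp only [hfY, poissonSeq, neg_nonneg]
  have hfZ' : fZ = skellam lam1 lam2 := funext fun k => by rw [hfZ, hfX', hfY']; rfl
  calc ∑' j, M r j * G j c
      = Real.exp (2 * (lam1 + lam2)) * ∑' j, fZ (r - j) * alternating fZ (j - c) := by
        simp only [hM, hG, alternating, ← tsum_mul_left, mul_left_comm]
    _ = Real.exp (2 * (lam1 + lam2)) *
          (Pi.single 0 (Real.exp (-(2 * (lam1 + lam2)))) : ℤ → ℝ) (r - c) := by
        rw [tsum_mul_sub_eq_dconv, hfZ', dconv_skellam_alternating]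
    _ = if r = c then 1 else 0 := by
        by_cases h : r = c
        · simp [h, ← Real.exp_add]
        · simp [h, sub_eq_zero]

/-- The bi-infinite Skellam matrix `M(i,j) = f_Z(i-j)` has two-sided inverse
`G(i,j) = e^{2(λ₁+λ₂)} (-1)^{i-j} f_Z(i-j)`. -/
theorem stmt_8 (lam1 lam2 : ℝ) (h1 : 0 < lam1) (h2 : 0 < lam2)
    (fX fY fZ : ℤ → ℝ) (M G : ℤ → ℤ → ℝ)
    (hfX : ∀ m : ℤ, fX m =
      if 0 ≤ m then Real.exp (-lam1) * lam1 ^ m.toNat / Nat.factorial m.toNat else 0)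
    (hfY : ∀ m : ℤ, fY m =
      if m ≤ 0 then Real.exp (-lam2) * lam2 ^ (-m).toNat / Nat.factorial (-m).toNat else 0)
    (hfZ : ∀ k : ℤ, fZ k = ∑' j : ℤ, fX (k - j) * fY j)
    (hM : ∀ i j : ℤ, M i j = fZ (i - j))
    (hG : ∀ i j : ℤ, G i j =
      Real.exp (2 * (lam1 + lam2)) * ((-1 : ℝ) ^ (i - j) * fZ (i - j))) :
    ∀ r c : ℤ, ∑' j : ℤ, M r j * G j c = if r = c then 1 else 0 :=
  stmt_8_general lam1 lam2 fX fY fZ M G hfX hfY hfZ hM hG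
end

section
/- Let 0 < p < 1 and r ≥ 1. With g_NB(·; p, r) the mass function of the difference of two independent NB(p, r) random variables and h(k) = (-1)^k f_B(k; p/(1+p), r) as above, the discrete convolution (g_NB(·;p,r) ⋆ h)(k) equals ((1-p)^{2r}/(1+p)^{2r}) if k = 0 and 0 for all k ≠ 0. -/
/-
With `u` the NB(p, r) mass function and `v l = (-1)^l f_B(l; q, r)`, the alternating sign
distributes over the autocorrelation, so `g_NB = u ⋆ ũ` and `h = v ⋆ ṽ`, where `ũ j = u (-j)`.
Since `q = p / (1 + p)`, the generating functions of `u` and `v` are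
`((1 - p) / (1 - p z))^r` and `((1 - p z) / (1 + p))^r`, so `u ⋆ v = c δ₀` with
`c = ((1 - p) / (1 + p))^r`; coefficientwise this is `(1 - X)^r (1 - X)^(-r) = 1`.
Hence `g_NB ⋆ h = (u ⋆ v) ⋆ (u ⋆ v)~ = c² δ₀`, the rearrangements being justified by the
summability of `u` and the finite support of `v`.
-/

open Finset
open scoped Pointwise

theorem Finset.Icc_sub_Icc_subset {α : Type*} [AddCommGroup α] [PartialOrder α]
    [IsOrderedAddMonoid α] [LocallyFiniteOrder α] [DecidableEq α] (a b c d : α) :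
    Icc a b - Icc c d ⊆ Icc (a - d) (b - c) := by
  intro x hx
  obtain ⟨y, hy, z, hz, rfl⟩ := mem_sub.1 hx
  rw [mem_Icc] at hy hz ⊢
  exact ⟨sub_le_sub hy.1 hz.2, sub_le_sub hy.2 hz.1⟩

namespace PowerSeries

theorem coeff_one_sub_X_pow {R : Type*} [CommRing R] (r n : ℕ) :
    coeff n ((1 - X : R⟦X⟧) ^ r) = (-1) ^ n * r.choose n := by
  have : (1 - X : R⟦X⟧) ^ r = rescale (-1) (((1 + Polynomial.X) ^ r : Polynomial R) : R⟦X⟧) := by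
    simp [sub_eq_add_neg]
  rw [this, coeff_rescale, Polynomial.coeff_coe, Polynomial.coeff_one_add_X_pow]

theorem one_sub_X_pow_mul_mk_choose {R : Type*} [CommRing R] (r : ℕ) :
    (1 - X) ^ r * mk (fun n ↦ ((n + r - 1).choose n : R)) = 1 := by
  cases r with
  | zero => ext (_ | n) <;> simp
  | succ d =>
    rw [mul_comm]
    convert mk_add_choose_mul_one_sub_pow_eq_one R (d := d) using 4 with n
    rw [show n + (d + 1) - 1 = d + n by omega, Nat.choose_symm_add]

end PowerSeries

open PowerSeries in
theorem sum_antidiagonal_neg_one_pow_mul_choose_mul_choose {R : Type*} [CommRing R] (r n : ℕ) :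
    ∑ x ∈ antidiagonal n, (-1) ^ x.1 * (r.choose x.1 : R) * (x.2 + r - 1).choose x.2 =
      if n = 0 then 1 else 0 := by
  simpa [coeff_mul, coeff_one_sub_X_pow, coeff_one] using
    congrArg (coeff n) (one_sub_X_pow_mul_mk_choose (R := R) r)

noncomputable def autocorr {G : Type*} [AddCommGroup G] (u : G → ℝ) (k : G) : ℝ :=
  ∑' j, u (k + j) * u j

section Autocorr

variable {G : Type*} [AddCommGroup G] {u v : G → ℝ} {S T : Finset G} {c : ℝ}

theorem Summable.mul_comp_add_left (hu : Summable u) (a : G) :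
    Summable fun j ↦ u (a + j) * u j :=
  (summable_mul_of_summable_norm hu.norm hu.norm).comp_injective
    (i := fun j ↦ (a + j, j)) fun _ _ h ↦ (Prod.ext_iff.1 h).2

theorem autocorr_eq_sum (hv : ∀ l ∉ S, v l = 0) (k : G) :
    autocorr v k = ∑ i ∈ S, v (k + i) * v i :=
  tsum_eq_sum fun i hi ↦ by rw [hv i hi, mul_zero]

variable [DecidableEq G]

theorem sum_mul_comp_add_eq_sum_mul_comp_sub (hv : ∀ l ∉ S, v l = 0) (hST : S - S ⊆ T) {i : G}
    (hi : i ∈ S) (w : G → ℝ) :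
    ∑ l ∈ T, w l * v (l + i) = ∑ m ∈ S, w (m - i) * v m := by
  have hT : ∀ l ∉ T, w l * v (l + i) = 0 := fun l hl ↦ by
    rw [hv (l + i) fun h ↦ hl (hST (by simpa using Finset.sub_mem_sub h hi)), mul_zero]
  rw [← tsum_eq_sum (L := .unconditional G) hT, ← (Equiv.subRight i).tsum_eq]
  simp only [Equiv.subRight_apply, sub_add_cancel]
  exact tsum_eq_sum fun m hm ↦ by rw [hv m hm, mul_zero]

theorem sum_autocorr_mul (hu : Summable u)
    (huv : ∀ m, ∑ l ∈ S, u (m - l) * v l = if m = 0 then c else 0) (a : G) :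
    ∑ m ∈ S, autocorr u (a - m) * v m = c * u (-a) := by
  calc ∑ m ∈ S, autocorr u (a - m) * v m
      = ∑ m ∈ S, ∑' j, u (a - m + j) * u j * v m := sum_congr rfl fun m _ ↦ tsum_mul_right.symm
    _ = ∑' j, ∑ m ∈ S, u (a - m + j) * u j * v m :=
        (Summable.tsum_finsetSum fun m _ ↦ (hu.mul_comp_add_left _).mul_right _).symm
    _ = ∑' j, if j = -a then c * u j else 0 := by
        refine tsum_congr fun j ↦ ?_
        simp_rw [sub_add_eq_add_sub, mul_right_comm _ (u j), ← sum_mul, huv,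
          add_eq_zero_iff_eq_neg']
        split_ifs <;> simp [mul_comm]
    _ = c * u (-a) := tsum_ite_eq (-a) (fun j ↦ c * u j)

theorem sum_autocorr_mul_autocorr (hu : Summable u) (hv : ∀ l ∉ S, v l = 0) (hST : S - S ⊆ T)
    (huv : ∀ m, ∑ l ∈ S, u (m - l) * v l = if m = 0 then c else 0) (k : G) :
    ∑ l ∈ T, autocorr u (k - l) * autocorr v l = if k = 0 then c ^ 2 else 0 := by
  calc ∑ l ∈ T, autocorr u (k - l) * autocorr v l
      = ∑ i ∈ S, (∑ m ∈ S, autocorr u (k + i - m) * v m) * v i := by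
        simp_rw [autocorr_eq_sum hv, mul_sum]
        rw [sum_comm]
        refine sum_congr rfl fun i hi ↦ ?_
        simp_rw [← mul_assoc]
        rw [← sum_mul, sum_mul_comp_add_eq_sum_mul_comp_sub hv hST hi]
        simp_rw [sub_sub_eq_add_sub]
    _ = c * ∑ l ∈ S, u (-k - l) * v l := by
        rw [mul_sum]
        refine sum_congr rfl fun i _ ↦ ?_
        rw [sum_autocorr_mul hu huv, neg_add', mul_assoc]
    _ = if k = 0 then c ^ 2 else 0 := by
        simp only [huv, neg_eq_zero]
        split_ifs <;> ring

end Autocorr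

theorem autocorr_neg_one_zpow_mul (v : ℤ → ℝ) (k : ℤ) :
    autocorr (fun l ↦ (-1) ^ l * v l) k = (-1) ^ k * autocorr v k := by
  rw [autocorr, autocorr, ← tsum_mul_left]
  refine tsum_congr fun j ↦ ?_
  have hj : ((-1 : ℝ) ^ j) ^ 2 = 1 := by
    rw [← zpow_natCast, ← zpow_mul, Even.neg_one_zpow ⟨j, by ring⟩]
  rw [zpow_add₀ (by norm_num)]
  linear_combination (v (k + j) * v j * (-1) ^ k) * hj

noncomputable def negBinomPMF (p : ℝ) (r : ℕ) (m : ℤ) : ℝ :=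
  if 0 ≤ m then ((m.toNat + r - 1).choose m.toNat : ℝ) * p ^ m.toNat * (1 - p) ^ r else 0

noncomputable def binomPMF (q : ℝ) (r : ℕ) (m : ℤ) : ℝ :=
  if 0 ≤ m ∧ m ≤ r then (r.choose m.toNat : ℝ) * q ^ m.toNat * (1 - q) ^ (r - m.toNat) else 0

section PMF

variable {p : ℝ} {r : ℕ}

@[simp]
theorem negBinomPMF_natCast (n : ℕ) :
    negBinomPMF p r n = ((n + r - 1).choose n : ℝ) * p ^ n * (1 - p) ^ r := by
  simp [negBinomPMF]

theorem negBinomPMF_of_neg {m : ℤ} (hm : m < 0) : negBinomPMF p r m = 0 :=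
  if_neg hm.not_ge

theorem summable_negBinomPMF (hp0 : 0 ≤ p) (hp1 : p < 1) : Summable (negBinomPMF p r) := by
  rw [← Nat.cast_injective.summable_iff fun m hm ↦ negBinomPMF_of_neg <| by
    contrapose! hm; exact ⟨m.toNat, Int.toNat_of_nonneg hm⟩]
  refine .of_nonneg_of_le (fun n ↦ ?_) (fun n ↦ ?_)
    ((summable_choose_mul_geometric_of_norm_lt_one r
      (by rwa [Real.norm_of_nonneg hp0])).mul_right ((1 - p) ^ r))
  · simp only [Function.comp_apply, negBinomPMF_natCast]
    have := sub_nonneg.2 hp1.le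
    positivity
  · simp only [Function.comp_apply, negBinomPMF_natCast]
    gcongr
    rw [← Nat.choose_symm_add]
    exact Nat.choose_le_choose n (by omega)

theorem binomPMF_of_notMem {q : ℝ} {m : ℤ} (hm : m ∉ Icc (0 : ℤ) r) : binomPMF q r m = 0 :=
  if_neg (by simpa using hm)

theorem binomPMF_div_one_add_natCast (hp : 1 + p ≠ 0) (i : ℕ) :
    binomPMF (p / (1 + p)) r i = r.choose i * p ^ i / (1 + p) ^ r := by
  rcases le_or_gt i r with hi | hi
  · rw [binomPMF, if_pos ⟨i.cast_nonneg, by exact_mod_cast hi⟩, Int.toNat_natCast,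
      one_sub_div hp, add_sub_cancel_right, div_pow, div_pow, one_pow,
      ← Nat.sub_add_cancel hi, pow_add, Nat.add_sub_cancel]
    field_simp
  · rw [binomPMF_of_notMem (by simp; omega), Nat.choose_eq_zero_of_lt hi]
    simp

end PMF

theorem sum_negBinomPMF_mul_alternating_binomPMF {p : ℝ} (hp : 1 + p ≠ 0) (r : ℕ) (m : ℤ) :
    ∑ l ∈ Icc (0 : ℤ) r, negBinomPMF p r (m - l) * ((-1) ^ l * binomPMF (p / (1 + p)) r l) =
      if m = 0 then ((1 - p) / (1 + p)) ^ r else 0 := by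
  set F : ℤ → ℝ := fun l ↦ negBinomPMF p r (m - l) * ((-1) ^ l * binomPMF (p / (1 + p)) r l)
  rcases lt_or_ge m 0 with hm | hm
  · rw [if_neg hm.ne]
    refine sum_eq_zero fun l hl ↦ ?_
    rw [negBinomPMF_of_neg (m := m - l) (by simp at hl; omega), zero_mul]
  obtain ⟨n, rfl⟩ := Int.eq_ofNat_of_zero_le hm
  calc ∑ l ∈ Icc (0 : ℤ) r, F l
      = ∑' l : ℤ, F l := (tsum_eq_sum fun l hl ↦ by simp [F, binomPMF_of_notMem hl]).symm
    _ = ∑' i : ℕ, F i := by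
        refine (Nat.cast_injective.tsum_eq fun l hl ↦ ?_).symm
        have hl0 : 0 ≤ l := by
          by_contra! hl0
          exact hl (mul_eq_zero_of_right _ (mul_eq_zero_of_right _
            (binomPMF_of_notMem (m := l) (by simp; omega))))
        exact ⟨l.toNat, Int.toNat_of_nonneg hl0⟩
    _ = ∑ i ∈ range (n + 1), F i := tsum_eq_sum fun i hi ↦ by
        simp only [F]
        rw [negBinomPMF_of_neg (m := n - i) (by simp at hi; omega), zero_mul]
    _ = ∑ x ∈ antidiagonal n, ((1 - p) / (1 + p)) ^ r * p ^ n *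
          ((-1) ^ x.1 * (r.choose x.1 : ℝ) * (x.2 + r - 1).choose x.2) := by
        refine (Nat.sum_antidiagonal_eq_sum_range_succ_mk (fun x ↦ F x.1) n).symm.trans
          (sum_congr rfl fun x hx ↦ ?_)
        rw [HasAntidiagonal.mem_antidiagonal] at hx
        subst hx
        simp only [F, div_pow, show ((x.1 + x.2 : ℕ) : ℤ) - x.1 = x.2 by push_cast; ring,
          negBinomPMF_natCast, binomPMF_div_one_add_natCast hp, zpow_natCast]
        field_simp
        ring
    _ = if (n : ℤ) = 0 then ((1 - p) / (1 + p)) ^ r else 0 := by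
        rw [← mul_sum, sum_antidiagonal_neg_one_pow_mul_choose_mul_choose]
        split_ifs <;> simp_all

theorem stmt_11_general (p : ℝ) (hp : 0 < p) (hp1 : p < 1) (r : ℕ)
    (q : ℝ) (hq : q = p / (1 + p)) (b fB h nb gNB : ℤ → ℝ)
    (hb : ∀ m : ℤ, b m =
      if 0 ≤ m ∧ m ≤ (r : ℤ) then
        (r.choose m.toNat : ℝ) * q ^ m.toNat * (1 - q) ^ (r - m.toNat) else 0)
    (hfB : ∀ k : ℤ, fB k = ∑' j : ℤ, b (k + j) * b j)
    (hh : ∀ k : ℤ, h k = (-1 : ℝ) ^ k * fB k)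
    (hnb : ∀ m : ℤ, nb m =
      if 0 ≤ m then
        ((m.toNat + r - 1).choose m.toNat : ℝ) * p ^ m.toNat * (1 - p) ^ r else 0)
    (hg : ∀ k : ℤ, gNB k = ∑' j : ℤ, nb (k + j) * nb j) :
    ∀ k : ℤ, ∑ l ∈ Finset.Icc (-(r : ℤ)) (r : ℤ), gNB (k - l) * h l
      = if k = 0 then (1 - p) ^ (2 * r) / (1 + p) ^ (2 * r) else 0 := by
  subst hq
  obtain rfl : nb = negBinomPMF p r := funext hnb
  obtain rfl : b = binomPMF (p / (1 + p)) r := funext hb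
  obtain rfl : gNB = autocorr (negBinomPMF p r) := funext hg
  obtain rfl : h = autocorr fun l ↦ (-1) ^ l * binomPMF (p / (1 + p)) r l :=
    funext fun l ↦ by rw [hh, hfB, autocorr_neg_one_zpow_mul, autocorr]
  intro k
  rw [sum_autocorr_mul_autocorr (summable_negBinomPMF hp.le hp1)
    (fun l hl ↦ by rw [binomPMF_of_notMem hl, mul_zero])
    (by simpa using Icc_sub_Icc_subset (0 : ℤ) r 0 r)
    (sum_negBinomPMF_mul_alternating_binomPMF (by positivity) r), ← pow_mul, div_pow, mul_comm r]

/-- The differenced negative binomial pmf convolved with the alternating-sign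
differenced-binomial pmf is `((1-p)/(1+p))^{2r}` times the delta at 0. -/
theorem stmt_11 (p : ℝ) (hp : 0 < p) (hp1 : p < 1) (r : ℕ) (hr : 1 ≤ r)
    (q : ℝ) (hq : q = p / (1 + p)) (b fB h nb gNB : ℤ → ℝ)
    (hb : ∀ m : ℤ, b m =
      if 0 ≤ m ∧ m ≤ (r : ℤ) then
        (r.choose m.toNat : ℝ) * q ^ m.toNat * (1 - q) ^ (r - m.toNat) else 0)
    (hfB : ∀ k : ℤ, fB k = ∑' j : ℤ, b (k + j) * b j)
    (hh : ∀ k : ℤ, h k = (-1 : ℝ) ^ k * fB k)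
    (hnb : ∀ m : ℤ, nb m =
      if 0 ≤ m then
        ((m.toNat + r - 1).choose m.toNat : ℝ) * p ^ m.toNat * (1 - p) ^ r else 0)
    (hg : ∀ k : ℤ, gNB k = ∑' j : ℤ, nb (k + j) * nb j) :
    ∀ k : ℤ, ∑ l ∈ Finset.Icc (-(r : ℤ)) (r : ℤ), gNB (k - l) * h l
      = if k = 0 then (1 - p) ^ (2 * r) / (1 + p) ^ (2 * r) else 0 :=
  stmt_11_general p hp hp1 r q hq b fB h nb gNB hb hfB hh hnb hg
end

section
/- Let M* be a column-stochastic n×n real matrix that is invertible, and let M be a column-stochastic m×n matrix. Then there exists a column-stochastic m×n matrix A with M = A M* if and only if every entry of M (M*)⁻¹ is nonnegative. -/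
/-- A column-stochastic matrix `M` factors as `A * Mstar` with `A`
column-stochastic iff `M * Mstar⁻¹` is entrywise nonnegative. -/
theorem stmt_14 (n m : ℕ) (Mstar : Matrix (Fin n) (Fin n) ℝ)
    (M : Matrix (Fin m) (Fin n) ℝ)
    (hMsPos : ∀ i j, 0 ≤ Mstar i j) (hMsSum : ∀ j, ∑ i, Mstar i j = 1)
    (hMsInv : IsUnit Mstar)
    (hMpos : ∀ i j, 0 ≤ M i j) (hMsum : ∀ j, ∑ i, M i j = 1) :
    (∃ A : Matrix (Fin m) (Fin n) ℝ,
        (∀ i j, 0 ≤ A i j) ∧ (∀ j, ∑ i, A i j = 1) ∧ M = A * Mstar) ↔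
      ∀ i j, 0 ≤ (M * Mstar⁻¹) i j := by
  have hdet : IsUnit Mstar.det := (Matrix.isUnit_iff_isUnit_det Mstar).mp hMsInv
  have hcancel : ∀ (A : Matrix (Fin m) (Fin n) ℝ), A * Mstar * Mstar⁻¹ = A :=
    fun A => Matrix.mul_nonsing_inv_cancel_right Mstar A hdet
  constructor
  · rintro ⟨A, hApos, _, rfl⟩ i j
    rw [hcancel]
    exact hApos i j
  · intro h
    refine ⟨M * Mstar⁻¹, h, ?_, ?_⟩
    · -- column sums of Mstar⁻¹ are 1
      have hinvsum : ∀ j, ∑ k, Mstar⁻¹ k j = 1 := by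
        intro j
        have h1 : Mstar * Mstar⁻¹ = 1 := Matrix.mul_nonsing_inv Mstar hdet
        have : ∑ i, (Mstar * Mstar⁻¹) i j = 1 := by
          rw [h1]
          simp [Matrix.one_apply, Finset.sum_ite_eq]
        calc ∑ k, Mstar⁻¹ k j = ∑ k, (∑ i, Mstar i k) * Mstar⁻¹ k j := by
              simp [hMsSum]
          _ = ∑ i, (Mstar * Mstar⁻¹) i j := by
              simp only [Matrix.mul_apply, Finset.sum_mul]
              rw [Finset.sum_comm]
          _ = 1 := this
      intro j
      calc ∑ i, (M * Mstar⁻¹) i j = ∑ k, (∑ i, M i k) * Mstar⁻¹ k j := by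
            simp only [Matrix.mul_apply, Finset.sum_mul]
            rw [Finset.sum_comm]
        _ = 1 := by simp [hMsum, hinvsum]
    · rw [Matrix.nonsing_inv_mul_cancel_right Mstar M hdet]
end
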